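/- Let λ₀ > 0, λ₁ ≥ 0, λ₂ > 0 and set η₀ = (2√(λ₀λ₂) + λ₁)/(2λ₂). The function ψ : ℝ → ℝ defined by ψ(t) = −λ₂(|t| − λ₁/(2λ₂))² + λ₀ if |t| ≥ η₀ and ψ(t) = 0 if |t| < η₀ is concave on ℝ. -/

import Mathlib

/-!
With `c = λ₁ / (2λ₂)`, the threshold `η₀` is exactly where the parabola `λ₀ - λ₂ (|t| - c)²`
crosses zero on `|t| ≥ c`, so `ψ(t) = min (λ₀ - λ₂ ((|t| - c)₊)²) 0`. As the square of a
nonnegative convex function, `((|t| - c)₊)²` is convex, hence `ψ` is a minimum of two concave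
functions.
-/

noncomputable section


/-- Threshold `η₀ = (2√(λ₀λ₂) + λ₁)/(2λ₂)`. -/
def eta0 (l0 l1 l2 : ℝ) : ℝ := (2 * Real.sqrt (l0 * l2) + l1) / (2 * l2)

/-- Scalar function `ψ` appearing in the dual objective. -/
def psi (l0 l1 l2 : ℝ) (t : ℝ) : ℝ :=
  if eta0 l0 l1 l2 ≤ |t| then -l2 * (|t| - l1 / (2 * l2)) ^ 2 + l0 else 0

open Set

theorem convexOn_max_norm_sub_zero_sq {E : Type*} [SeminormedAddCommGroup E] [NormedSpace ℝ E]
    (a : ℝ) : ConvexOn ℝ univ (fun x : E => max (‖x‖ - a) 0 ^ 2) :=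
  (((convexOn_norm convex_univ).add_const (-a)).sup (convexOn_const 0 convex_univ)).pow
    (fun _ _ => le_max_right _ _) 2

theorem eta0_le_iff {l0 l1 l2 : ℝ} (hl2 : 0 < l2) (x : ℝ) :
    eta0 l0 l1 l2 ≤ x ↔ 0 ≤ x - l1 / (2 * l2) ∧ l0 ≤ l2 * (x - l1 / (2 * l2)) ^ 2 := by
  have h : eta0 l0 l1 l2 = l1 / (2 * l2) + √(l0 * l2) / l2 := by
    rw [eta0]
    field_simp
    ring
  rw [h, ← le_sub_iff_add_le', div_le_iff₀' hl2, Real.sqrt_le_iff, mul_nonneg_iff_of_pos_left hl2,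
    mul_pow, sq l2, mul_assoc, mul_comm l0, mul_le_mul_iff_right₀ hl2]

theorem psi_eq_min_zero {l0 l1 l2 : ℝ} (hl0 : 0 ≤ l0) (hl2 : 0 < l2) (t : ℝ) :
    psi l0 l1 l2 t = min (l0 - l2 * max (|t| - l1 / (2 * l2)) 0 ^ 2) 0 := by
  simp only [psi, eta0_le_iff hl2]
  split_ifs with h
  · rw [max_eq_left h.1, min_eq_left (by linarith [h.2])]
    ring
  · rcases le_or_gt 0 (|t| - l1 / (2 * l2)) with hu | hu
    · rw [max_eq_left hu, min_eq_right (by linarith [not_and.mp h hu])]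
    · rw [max_eq_right hu.le]
      simpa using hl0

theorem stmt4_general (l0 l1 l2 : ℝ) (hl0 : 0 < l0) (hl2 : 0 < l2) :
    ConcaveOn ℝ Set.univ (psi l0 l1 l2) := by
  have hsq : ConvexOn ℝ univ (fun t : ℝ => max (|t| - l1 / (2 * l2)) 0 ^ 2) := by
    simpa only [Real.norm_eq_abs] using convexOn_max_norm_sub_zero_sq (E := ℝ) (l1 / (2 * l2))
  have hmin := ((concaveOn_const l0 convex_univ).sub (hsq.smul hl2.le)).inf
    (concaveOn_const 0 convex_univ)
  exact hmin.congr fun t _ => (psi_eq_min_zero hl0.le hl2 t).symm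

/-- `ψ` is concave on `ℝ`. -/
theorem stmt4 (l0 l1 l2 : ℝ) (hl0 : 0 < l0) (hl1 : 0 ≤ l1) (hl2 : 0 < l2) :
    ConcaveOn ℝ Set.univ (psi l0 l1 l2) :=
  stmt4_general l0 l1 l2 hl0 hl2
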